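/- Let P be an n×n positive definite matrix, A_x ∈ ℝ^{1×n} a row vector, b ∈ ℝ, x̄ ∈ ℝⁿ, δ ≥ 0. Then (∀ x, ‖x - x̄‖_P ≤ δ → A_x x ≤ b) if and only if A_x x̄ + ‖(A_x P^{-1/2})ᵀ‖ δ ≤ b. -/

import Mathlib

open scoped Matrix.Norms.L2Operator
open Matrix

/-- The positive semidefinite square root of a positive semidefinite matrix
(the definition `Matrix.PosSemidef.sqrt` of the older Mathlib, removed since). -/
noncomputable def Matrix.PosSemidef.sqrt {n : Type*} [Fintype n] [DecidableEq n]
    {A : Matrix n n ℝ} (hA : A.PosSemidef) : Matrix n n ℝ :=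
  hA.1.eigenvectorUnitary.1 * diagonal ((↑) ∘ (Real.sqrt ·) ∘ hA.1.eigenvalues) *
    (star hA.1.eigenvectorUnitary : Matrix n n ℝ)

noncomputable def eNorm {n : ℕ} (x : Fin n → ℝ) : ℝ := Real.sqrt (x ⬝ᵥ x)

noncomputable def pNorm {n : ℕ} (P : Matrix (Fin n) (Fin n) ℝ) (x : Fin n → ℝ) : ℝ :=
  Real.sqrt (x ⬝ᵥ P *ᵥ x)
/-! Writing `S` for the symmetric square root of `P`, `‖x - x̄‖_P = ‖S (x - x̄)‖`, so the
substitution `y = S (x - x̄)` turns the ellipsoid into the Euclidean ball of radius `δ` and the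
constraint into `(A_x S⁻¹) ⬝ y ≤ b - A_x x̄`. By Cauchy–Schwarz a linear functional `⟪c, ·⟫`
attains its maximum `‖c‖ δ` over that ball at `(δ / ‖c‖) c`. -/

section HalfSpace

variable {E : Type*} [NormedAddCommGroup E] [InnerProductSpace ℝ E]

theorem forall_norm_le_inner_le_iff (c : E) (r : ℝ) {δ : ℝ} (hδ : 0 ≤ δ) :
    (∀ y : E, ‖y‖ ≤ δ → inner ℝ c y ≤ r) ↔ ‖c‖ * δ ≤ r := by
  constructor
  · intro H
    rcases eq_or_ne c 0 with rfl | hc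
    · simpa using H 0 (by simpa using hδ)
    have hnc : 0 < ‖c‖ := norm_pos_iff.2 hc
    have hy : ‖(δ / ‖c‖) • c‖ ≤ δ := by
      rw [norm_smul, Real.norm_of_nonneg (by positivity), div_mul_cancel₀ _ hnc.ne']
    have hinner : inner ℝ c ((δ / ‖c‖) • c) = ‖c‖ * δ := by
      rw [real_inner_smul_right, real_inner_self_eq_norm_sq]
      field_simp
    simpa [hinner] using H _ hy
  · intro H y hy
    calc inner ℝ c y ≤ ‖c‖ * ‖y‖ := real_inner_le_norm c y
      _ ≤ ‖c‖ * δ := by gcongr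
      _ ≤ r := H

end HalfSpace

theorem eNorm_eq_norm_toLp {n : ℕ} (x : Fin n → ℝ) :
    eNorm x = ‖(WithLp.toLp 2 x : EuclideanSpace ℝ (Fin n))‖ := by
  rw [norm_eq_sqrt_real_inner, EuclideanSpace.inner_toLp_toLp]
  rfl

theorem forall_eNorm_le_dotProduct_le_iff {n : ℕ} (c : Fin n → ℝ) (r : ℝ) {δ : ℝ}
    (hδ : 0 ≤ δ) : (∀ y : Fin n → ℝ, eNorm y ≤ δ → c ⬝ᵥ y ≤ r) ↔ eNorm c * δ ≤ r := by
  rw [eNorm_eq_norm_toLp, ← forall_norm_le_inner_le_iff _ r hδ,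
    (WithLp.equiv 2 (Fin n → ℝ)).symm.forall_congr_left]
  simp only [eNorm_eq_norm_toLp, dotProduct_comm c]
  rfl

theorem pNorm_transpose_mul_self {m n : ℕ} (S : Matrix (Fin m) (Fin n) ℝ) (v : Fin n → ℝ) :
    pNorm (Sᵀ * S) v = eNorm (S *ᵥ v) := by
  rw [pNorm, eNorm, ← mulVec_mulVec, dotProduct_mulVec, vecMul_transpose]

namespace Matrix.PosSemidef

variable {ι : Type*} [Fintype ι] [DecidableEq ι] {A : Matrix ι ι ℝ}

theorem sqrt_transpose (hA : A.PosSemidef) : hA.sqrtᵀ = hA.sqrt := by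
  simp [sqrt, transpose_mul, star_eq_conjTranspose, Matrix.mul_assoc]

theorem sqrt_mul_self (hA : A.PosSemidef) : hA.sqrt * hA.sqrt = A := by
  have hU := Unitary.coe_star_mul_self hA.1.eigenvectorUnitary
  conv_rhs => rw [hA.1.spectral_theorem, Unitary.conjStarAlgAut_apply]
  simp only [sqrt, Matrix.mul_assoc]
  rw [← Matrix.mul_assoc (star _ : Matrix _ _ ℝ) (_ : Matrix _ _ ℝ), hU, Matrix.one_mul,
    ← Matrix.mul_assoc (diagonal _), diagonal_mul_diagonal]
  congr 3
  funext i
  simp [Real.mul_self_sqrt (hA.eigenvalues_nonneg i)]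

theorem sqrt_transpose_mul_self (hA : A.PosSemidef) : hA.sqrtᵀ * hA.sqrt = A := by
  rw [sqrt_transpose, sqrt_mul_self]

end Matrix.PosSemidef

theorem Matrix.PosDef.isUnit_sqrt {ι : Type*} [Fintype ι] [DecidableEq ι]
    {A : Matrix ι ι ℝ} (hA : A.PosDef) : IsUnit hA.posSemidef.sqrt :=
  isUnit_of_mul_isUnit_left (hA.posSemidef.sqrt_mul_self ▸ hA.isUnit)

theorem forall_pNorm_sub_le_iff {n : ℕ} (S : Matrix (Fin n) (Fin n) ℝ) (hS : IsUnit S)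
    (a : Fin n → ℝ) (b : ℝ) (xb : Fin n → ℝ) (δ : ℝ) :
    (∀ x, pNorm (Sᵀ * S) (x - xb) ≤ δ → a ⬝ᵥ x ≤ b) ↔
      ∀ y, eNorm y ≤ δ → (a ᵥ* S⁻¹) ⬝ᵥ y ≤ b - a ⬝ᵥ xb := by
  have hdet : IsUnit S.det := (isUnit_iff_isUnit_det S).1 hS
  have hchange : ∀ x, a ⬝ᵥ x = a ⬝ᵥ xb + (a ᵥ* S⁻¹) ⬝ᵥ (S *ᵥ (x - xb)) := by
    intro x
    rw [← dotProduct_mulVec, mulVec_mulVec, nonsing_inv_mul S hdet, one_mulVec,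
      dotProduct_sub]
    ring
  constructor
  · intro H y hy
    have hx : S *ᵥ (xb + S⁻¹ *ᵥ y - xb) = y := by
      rw [add_sub_cancel_left, mulVec_mulVec, mul_nonsing_inv S hdet, one_mulVec]
    have := H (xb + S⁻¹ *ᵥ y) (by rwa [pNorm_transpose_mul_self, hx])
    rw [hchange, hx] at this
    linarith
  · intro H x hx
    rw [pNorm_transpose_mul_self] at hx
    rw [hchange]
    linarith [H _ hx]

theorem stmt_7 {n : ℕ} (P : Matrix (Fin n) (Fin n) ℝ) (hP : P.PosDef)
    (Ax : Fin n → ℝ) (b : ℝ) (xb : Fin n → ℝ) (δ : ℝ) (hδ : 0 ≤ δ) :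
    (∀ x : Fin n → ℝ, pNorm P (x - xb) ≤ δ → Ax ⬝ᵥ x ≤ b) ↔
      Ax ⬝ᵥ xb + eNorm (Ax ᵥ* (hP.posSemidef.sqrt)⁻¹) * δ ≤ b := by
  conv_lhs => rw [← hP.posSemidef.sqrt_transpose_mul_self]
  rw [forall_pNorm_sub_le_iff _ hP.isUnit_sqrt, forall_eNorm_le_dotProduct_le_iff _ _ hδ]
  exact le_sub_iff_add_le'
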